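/- arXiv:1705.06046 — 2 statements merged into one kernel-verified Lean document; each statement's English description precedes it below -/
import Mathlib

section
/- Let α > 0, T > 0, h > 0, φ ∈ C([−h,0], ℝ), and let f : [0,T] × C([−h,0], ℝ) → ℝ be continuous and bounded, say |f(t,ψ)| ≤ M for all (t,ψ). Then there exists a continuous function u : [−h,T] → ℝ with u = φ on [−h,0] satisfying u(t) = φ(0) + (1/Γ(α)) ∫_0^t (t−s)^{α−1} f(s, u_t) ds for all t ∈ [0,T], where u_t(θ) = u(t+θ) for θ ∈ [−h,0]. -/
open MeasureTheory intervalIntegral Set Filter Topology BoundedContinuousFunction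

section FracAux

variable {α M : ℝ} (hα : 0 < α)




include hα in
/-- kernel integrability -/
lemma kern_intable (a b c : ℝ) :
    IntervalIntegrable (fun s => (c - s) ^ (α - 1)) volume a b := by
  have h : (-1:ℝ) < α - 1 := by linarith
  simpa using (intervalIntegral.intervalIntegrable_rpow' (a := c - a) (b := c - b) h).comp_sub_left c

include hα in
/-- kernel integral value -/
lemma kern_integral {a b c : ℝ} (hab : a ≤ b) (hbc : b ≤ c) :
    ∫ s in a..b, (c - s) ^ (α - 1) = ((c - a) ^ α - (c - b) ^ α) / α := by
  have h : (-1:ℝ) < α - 1 := by linarith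
  rw [intervalIntegral.integral_comp_sub_left (fun x => x ^ (α - 1)) c,
    integral_rpow (Or.inl h)]
  ring_nf

include hα in
/-- abs bound for kernel times bounded g -/
lemma kern_abs_le {a b c C : ℝ} (hab : a ≤ b) (hbc : b ≤ c) {g : ℝ → ℝ}
    (hint : IntervalIntegrable (fun s => (c - s) ^ (α - 1) * g s) volume a b)
    (hbd : ∀ s ∈ Icc a b, |g s| ≤ C) :
    |∫ s in a..b, (c - s) ^ (α - 1) * g s| ≤ C * ((c - a) ^ α - (c - b) ^ α) / α := by
  have h1 : |∫ s in a..b, (c - s) ^ (α - 1) * g s|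
      ≤ ∫ s in a..b, |(c - s) ^ (α - 1) * g s| := abs_integral_le_integral_abs hab
  have h2 : ∫ s in a..b, |(c - s) ^ (α - 1) * g s| ≤ ∫ s in a..b, C * (c - s) ^ (α - 1) := by
    apply integral_mono_on hab hint.abs ((kern_intable hα a b c).const_mul C)
    intro s hs
    have hk : 0 ≤ (c - s) ^ (α - 1) := Real.rpow_nonneg (by linarith [hs.2]) _
    rw [abs_mul, abs_of_nonneg hk]
    calc (c - s) ^ (α - 1) * |g s| ≤ (c - s) ^ (α - 1) * C :=
          mul_le_mul_of_nonneg_left (hbd s hs) hk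
      _ = C * (c - s) ^ (α - 1) := mul_comm _ _
  rw [intervalIntegral.integral_const_mul, kern_integral hα hab hbc] at h2
  calc |∫ s in a..b, (c - s) ^ (α - 1) * g s| ≤ _ := h1
    _ ≤ C * (((c - a) ^ α - (c - b) ^ α) / α) := h2
    _ = C * ((c - a) ^ α - (c - b) ^ α) / α := by ring




include hα in
/-- difference estimate for the fractional integral, ordered version -/
lemma frac_diff_le (hM : 0 ≤ M) {g : ℝ → ℝ} (hg : ContinuousOn g (Ici 0))
    (hbd : ∀ s, |g s| ≤ M) {a b : ℝ} (ha : 0 ≤ a) (hab : a ≤ b) :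
    |(∫ s in (0:ℝ)..b, (b - s) ^ (α - 1) * g s) - ∫ s in (0:ℝ)..a, (a - s) ^ (α - 1) * g s|
      ≤ M / α * (|b ^ α - a ^ α| + 2 * (b - a) ^ α) := by
  have hb : 0 ≤ b := ha.trans hab
  have h1 : (-1:ℝ) < α - 1 := by linarith
  have hga : ContinuousOn g (uIcc 0 a) := hg.mono (by rw [uIcc_of_le ha]; exact Icc_subset_Ici_self)
  have hgb : ContinuousOn g (uIcc a b) := hg.mono (by
    rw [uIcc_of_le hab]
    exact fun x hx => ha.trans hx.1)
  have intKa : IntervalIntegrable (fun s => (a - s) ^ (α - 1) * g s) volume 0 a :=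
    (kern_intable hα 0 a a).mul_continuousOn hga
  have intKb0a : IntervalIntegrable (fun s => (b - s) ^ (α - 1) * g s) volume 0 a :=
    (kern_intable hα 0 a b).mul_continuousOn hga
  have intKbab : IntervalIntegrable (fun s => (b - s) ^ (α - 1) * g s) volume a b :=
    (kern_intable hα a b b).mul_continuousOn hgb
  -- split
  have hsplit : (∫ s in (0:ℝ)..b, (b - s) ^ (α - 1) * g s)
      = (∫ s in (0:ℝ)..a, (b - s) ^ (α - 1) * g s) + ∫ s in a..b, (b - s) ^ (α - 1) * g s :=
    (integral_add_adjacent_intervals intKb0a intKbab).symm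
  -- tail bound
  have htail : |∫ s in a..b, (b - s) ^ (α - 1) * g s| ≤ M * (b - a) ^ α / α := by
    have := kern_abs_le hα hab le_rfl intKbab (fun s _ => hbd s)
    simpa [Real.zero_rpow hα.ne'] using this
  -- middle bound
  have hmid : |(∫ s in (0:ℝ)..a, (b - s) ^ (α - 1) * g s)
      - ∫ s in (0:ℝ)..a, (a - s) ^ (α - 1) * g s|
      ≤ M * ((|b ^ α - a ^ α| + (b - a) ^ α) / α) := by
    rw [← integral_sub intKb0a intKa]
    have hrw : ∀ s, (b - s) ^ (α - 1) * g s - (a - s) ^ (α - 1) * g s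
        = ((b - s) ^ (α - 1) - (a - s) ^ (α - 1)) * g s := fun s => by ring
    simp_rw [hrw]
    have habs : |∫ s in (0:ℝ)..a, ((b - s) ^ (α - 1) - (a - s) ^ (α - 1)) * g s|
        ≤ ∫ s in (0:ℝ)..a, |(b - s) ^ (α - 1) - (a - s) ^ (α - 1)| * M := by
      calc |∫ s in (0:ℝ)..a, ((b - s) ^ (α - 1) - (a - s) ^ (α - 1)) * g s|
          ≤ ∫ s in (0:ℝ)..a, |((b - s) ^ (α - 1) - (a - s) ^ (α - 1)) * g s| :=
            abs_integral_le_integral_abs ha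
        _ ≤ ∫ s in (0:ℝ)..a, |(b - s) ^ (α - 1) - (a - s) ^ (α - 1)| * M := by
            apply integral_mono_on ha
              (((kern_intable hα 0 a b).sub (kern_intable hα 0 a a)).mul_continuousOn hga).abs
              (((kern_intable hα 0 a b).sub (kern_intable hα 0 a a)).abs.mul_const M)
            intro s _
            rw [abs_mul]
            exact mul_le_mul_of_nonneg_left (hbd s) (abs_nonneg _)
    have hkey : ∫ s in (0:ℝ)..a, |(b - s) ^ (α - 1) - (a - s) ^ (α - 1)|
        ≤ (|b ^ α - a ^ α| + (b - a) ^ α) / α := by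
      have hIb : ∫ s in (0:ℝ)..a, (b - s) ^ (α - 1) = (b ^ α - (b - a) ^ α) / α := by
        simpa using kern_integral (c := b) hα ha hab
      have hIa : ∫ s in (0:ℝ)..a, (a - s) ^ (α - 1) = a ^ α / α := by
        have := kern_integral (c := a) hα ha le_rfl
        simpa [Real.zero_rpow hα.ne'] using this
      rcases le_or_gt 1 α with h1α | h1α
      · -- increasing kernel: |diff| = Kb - Ka
        have heq : ∫ s in (0:ℝ)..a, |(b - s) ^ (α - 1) - (a - s) ^ (α - 1)|
            = ∫ s in (0:ℝ)..a, ((b - s) ^ (α - 1) - (a - s) ^ (α - 1)) := by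
          apply integral_congr
          intro s hs
          rw [uIcc_of_le ha] at hs
          exact abs_of_nonneg (sub_nonneg.2 (Real.rpow_le_rpow (by linarith [hs.2])
            (by linarith) (by linarith)))
        rw [heq, integral_sub (kern_intable hα 0 a b) (kern_intable hα 0 a a), hIb, hIa,
          ← sub_div]
        have h2 : b ^ α - a ^ α ≤ |b ^ α - a ^ α| := le_abs_self _
        have h3 : 0 ≤ (b - a) ^ α := Real.rpow_nonneg (by linarith) _
        gcongr
        linarith
      · -- decreasing kernel a.e.: |diff| = Ka - Kb a.e.
        have hae : ∀ᵐ x : ℝ, x ∈ Set.uIoc (0:ℝ) a →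
            |(b - x) ^ (α - 1) - (a - x) ^ (α - 1)| = (a - x) ^ (α - 1) - (b - x) ^ (α - 1) := by
          have hne : ∀ᵐ x : ℝ, x ≠ a := by
            rw [MeasureTheory.ae_iff]
            simp only [ne_eq, not_not, Set.setOf_eq_eq_singleton]
            exact Real.volume_singleton
          filter_upwards [hne] with x hx hxI
          rw [uIoc_of_le ha] at hxI
          have hxa : x < a := lt_of_le_of_ne hxI.2 hx
          have hle : (b - x) ^ (α - 1) ≤ (a - x) ^ (α - 1) :=
            Real.rpow_le_rpow_of_nonpos (by linarith) (by linarith) (by linarith)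
          rw [abs_of_nonpos (by linarith), neg_sub]
        have heq : ∫ s in (0:ℝ)..a, |(b - s) ^ (α - 1) - (a - s) ^ (α - 1)|
            = ∫ s in (0:ℝ)..a, ((a - s) ^ (α - 1) - (b - s) ^ (α - 1)) :=
          integral_congr_ae hae
        rw [heq, integral_sub (kern_intable hα 0 a a) (kern_intable hα 0 a b), hIa, hIb,
          ← sub_div]
        have h2 : a ^ α - b ^ α ≤ |b ^ α - a ^ α| := by
          rw [abs_sub_comm]; exact le_abs_self _
        have h3 : 0 ≤ (b - a) ^ α := Real.rpow_nonneg (by linarith) _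
        gcongr
        linarith
    have hM' : ∫ s in (0:ℝ)..a, |(b - s) ^ (α - 1) - (a - s) ^ (α - 1)| * M
        = M * ∫ s in (0:ℝ)..a, |(b - s) ^ (α - 1) - (a - s) ^ (α - 1)| := by
      rw [← intervalIntegral.integral_const_mul]
      congr 1; ext s; ring
    calc |∫ s in (0:ℝ)..a, ((b - s) ^ (α - 1) - (a - s) ^ (α - 1)) * g s| ≤ _ := habs
      _ = M * ∫ s in (0:ℝ)..a, |(b - s) ^ (α - 1) - (a - s) ^ (α - 1)| := hM'
      _ ≤ M * ((|b ^ α - a ^ α| + (b - a) ^ α) / α) := by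
          exact mul_le_mul_of_nonneg_left hkey hM
  calc |(∫ s in (0:ℝ)..b, (b - s) ^ (α - 1) * g s) - ∫ s in (0:ℝ)..a, (a - s) ^ (α - 1) * g s|
      = |((∫ s in (0:ℝ)..a, (b - s) ^ (α - 1) * g s)
          - ∫ s in (0:ℝ)..a, (a - s) ^ (α - 1) * g s)
          + ∫ s in a..b, (b - s) ^ (α - 1) * g s| := by rw [hsplit]; congr 1; ring
    _ ≤ |(∫ s in (0:ℝ)..a, (b - s) ^ (α - 1) * g s)
          - ∫ s in (0:ℝ)..a, (a - s) ^ (α - 1) * g s|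
          + |∫ s in a..b, (b - s) ^ (α - 1) * g s| := abs_add_le _ _
    _ ≤ M * ((|b ^ α - a ^ α| + (b - a) ^ α) / α) + M * (b - a) ^ α / α :=
          add_le_add hmid htail
    _ = M / α * (|b ^ α - a ^ α| + 2 * (b - a) ^ α) := by ring



include hα in
/-- symmetric version of the difference estimate -/
lemma frac_diff_le' (hM : 0 ≤ M) {g : ℝ → ℝ} (hg : ContinuousOn g (Ici 0))
    (hbd : ∀ s, |g s| ≤ M) {a b : ℝ} (ha : 0 ≤ a) (hb : 0 ≤ b) :
    |(∫ s in (0:ℝ)..b, (b - s) ^ (α - 1) * g s) - ∫ s in (0:ℝ)..a, (a - s) ^ (α - 1) * g s|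
      ≤ M / α * (|b ^ α - a ^ α| + 2 * |b - a| ^ α) := by
  rcases le_total a b with hab | hab
  · have h2 : |b - a| = b - a := abs_of_nonneg (by linarith)
    rw [h2]
    exact frac_diff_le hα hM hg hbd ha hab
  · have h2 : |b - a| = a - b := by
      rw [abs_of_nonpos (by linarith), neg_sub]
    have h3 : |b ^ α - a ^ α| = |a ^ α - b ^ α| := abs_sub_comm _ _
    rw [h2, h3, abs_sub_comm]
    exact frac_diff_le hα hM hg hbd hb hab

include hα in
/-- continuity of the clamped fractional integral -/
lemma frac_cont (hM : 0 ≤ M) {g : ℝ → ℝ} (hg : ContinuousOn g (Ici 0))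
    (hbd : ∀ s, |g s| ≤ M) :
    Continuous (fun t : ℝ => ∫ s in (0:ℝ)..(max t 0), (max t 0 - s) ^ (α - 1) * g s) := by
  rw [continuous_iff_continuousAt]
  intro t₀
  set J : ℝ → ℝ := fun t => ∫ s in (0:ℝ)..(max t 0), (max t 0 - s) ^ (α - 1) * g s with hJ
  have hbnd : ∀ t, dist (J t) (J t₀)
      ≤ M / α * (|(max t 0) ^ α - (max t₀ 0) ^ α| + 2 * |max t 0 - max t₀ 0| ^ α) := by
    intro t
    rw [Real.dist_eq]
    exact frac_diff_le' hα hM hg hbd (le_max_right _ _) (le_max_right _ _)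
  have hx : ContinuousAt (fun x : ℝ => x ^ α) (max t₀ 0) := by
    rcases (le_max_right t₀ 0).lt_or_eq with h | h
    · exact Real.continuousAt_rpow_const _ _ (Or.inl h.ne')
    · rw [← h]
      exact Real.continuousAt_rpow_const _ _ (Or.inr hα.le)
  have h0 : ContinuousAt (fun x : ℝ => |x| ^ α) 0 := by
    have h1 : ContinuousAt (fun x : ℝ => x ^ α) (|(0:ℝ)|) := by
      rw [abs_zero]
      exact Real.continuousAt_rpow_const _ _ (Or.inr hα.le)
    exact h1.comp continuous_abs.continuousAt
  have hBnd : Filter.Tendsto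
      (fun t => M / α * (|(max t 0) ^ α - (max t₀ 0) ^ α| + 2 * |max t 0 - max t₀ 0| ^ α))
      (nhds t₀) (nhds 0) := by
    have hmax : Filter.Tendsto (fun t : ℝ => max t 0) (nhds t₀) (nhds (max t₀ 0)) :=
      (continuous_max.comp (continuous_id.prodMk continuous_const)).continuousAt
    have h1 : Filter.Tendsto (fun t : ℝ => |(max t 0) ^ α - (max t₀ 0) ^ α|) (nhds t₀)
        (nhds 0) := by
      have := (hx.tendsto.comp hmax).sub_const ((max t₀ 0) ^ α)
      simpa [Function.comp_def] using (continuous_abs.continuousAt (x := (0:ℝ))).tendsto.comp (by simpa using this)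
    have h2 : Filter.Tendsto (fun t : ℝ => |max t 0 - max t₀ 0| ^ α) (nhds t₀) (nhds 0) := by
      have hsub : Filter.Tendsto (fun t : ℝ => max t 0 - max t₀ 0) (nhds t₀) (nhds 0) := by
        simpa using hmax.sub_const (max t₀ 0)
      have := h0.tendsto.comp hsub
      simpa [Function.comp_def, Real.zero_rpow hα.ne', abs_zero] using this
    have := (h1.add (h2.const_mul 2)).const_mul (M / α)
    simpa using this
  have : Filter.Tendsto (fun t => dist (J t) (J t₀)) (nhds t₀) (nhds 0) :=
    squeeze_zero (fun t => dist_nonneg) hbnd hBnd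
  exact tendsto_iff_dist_tendsto_zero.2 this

end FracAux
noncomputable def histMap (h : ℝ) (w : C(ℝ, ℝ)) : C(ℝ, C(Set.Icc (-h) (0:ℝ), ℝ)) :=
  ContinuousMap.curry
    ⟨fun p : ℝ × Set.Icc (-h) (0:ℝ) => w (p.1 + p.2.1),
      w.continuous.comp (continuous_fst.add (continuous_subtype_val.comp continuous_snd))⟩

@[simp] lemma histMap_apply (h : ℝ) (w : C(ℝ, ℝ)) (t : ℝ) (θ : Set.Icc (-h) (0:ℝ)) :
    histMap h w t θ = w (t + θ.1) := rfl

noncomputable def PhiMap (α h T c δ : ℝ) (φt : ℝ → ℝ)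
    (f : ℝ → C(Set.Icc (-h) (0:ℝ), ℝ) → ℝ) (w : C(ℝ, ℝ)) : ℝ → ℝ :=
  fun t => φt t + c * ∫ s in (0:ℝ)..(max t 0),
    (max t 0 - s) ^ (α - 1) * f (min s T) (histMap h w (min s T - δ))

section PhiAux

variable {α h T M c δ : ℝ} {f : ℝ → C(Set.Icc (-h) (0:ℝ), ℝ) → ℝ} {φt : ℝ → ℝ}

lemma gw_cont (hT : 0 < T)
    (hf : ContinuousOn (fun p : ℝ × C(Set.Icc (-h) (0:ℝ), ℝ) => f p.1 p.2)
      (Set.Icc 0 T ×ˢ Set.univ)) (δ : ℝ) (w : C(ℝ, ℝ)) :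
    ContinuousOn (fun s => f (min s T) (histMap h w (min s T - δ))) (Ici 0) := by
  have hc : Continuous (fun s : ℝ => ((min s T, histMap h w (min s T - δ)) :
      ℝ × C(Set.Icc (-h) (0:ℝ), ℝ))) := by
    have hmin : Continuous (fun s : ℝ => min s T) := continuous_id.min continuous_const
    exact hmin.prodMk ((histMap h w).continuous.comp (hmin.sub continuous_const))
  exact hf.comp hc.continuousOn
    (fun s hs => ⟨⟨le_min hs hT.le, min_le_right _ _⟩, Set.mem_univ _⟩)

lemma PhiMap_cont (hα : 0 < α) (hT : 0 < T) (hM : 0 ≤ M)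
    (hf : ContinuousOn (fun p : ℝ × C(Set.Icc (-h) (0:ℝ), ℝ) => f p.1 p.2)
      (Set.Icc 0 T ×ˢ Set.univ))
    (hfb : ∀ t ψ, |f t ψ| ≤ M) (hφt : Continuous φt) (c δ : ℝ) (w : C(ℝ, ℝ)) :
    Continuous (PhiMap α h T c δ φt f w) :=
  hφt.add (continuous_const.mul (frac_cont hα hM (gw_cont hT hf δ w) (fun _ => hfb _ _)))

lemma PhiMap_past (w : C(ℝ, ℝ)) {t : ℝ} (ht : t ≤ 0) : PhiMap α h T c δ φt f w t = φt t := by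
  unfold PhiMap
  rw [max_eq_right ht, intervalIntegral.integral_same, mul_zero, add_zero]

lemma PhiMap_diff (hα : 0 < α) (hT : 0 < T) (hM : 0 ≤ M) (hc : 0 ≤ c)
    (hf : ContinuousOn (fun p : ℝ × C(Set.Icc (-h) (0:ℝ), ℝ) => f p.1 p.2)
      (Set.Icc 0 T ×ˢ Set.univ))
    (hfb : ∀ t ψ, |f t ψ| ≤ M) (w : C(ℝ, ℝ)) (s t : ℝ) :
    |PhiMap α h T c δ φt f w s - PhiMap α h T c δ φt f w t|
      ≤ |φt s - φt t|
        + c * (M / α * (|(max s 0) ^ α - (max t 0) ^ α| + 2 * |max s 0 - max t 0| ^ α)) := by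
  unfold PhiMap
  have h1 := frac_diff_le' hα hM (gw_cont hT hf δ w) (fun x => hfb _ _)
    (le_max_right t 0) (le_max_right s 0)
  have halg : ∀ x y p q : ℝ, |x + c * p - (y + c * q)| ≤ |x - y| + c * |p - q| := by
    intro x y p q
    rw [show x + c * p - (y + c * q) = (x - y) + c * (p - q) from by ring]
    calc |(x - y) + c * (p - q)| ≤ |x - y| + |c * (p - q)| := abs_add_le _ _
      _ = |x - y| + c * |p - q| := by rw [abs_mul, abs_of_nonneg hc]
  exact (halg _ _ _ _).trans (add_le_add le_rfl (mul_le_mul_of_nonneg_left h1 hc))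
lemma PhiMap_bound (hα : 0 < α) (hT : 0 < T) (hM : 0 ≤ M) (hc : 0 ≤ c) {Bφ : ℝ}
    (hf : ContinuousOn (fun p : ℝ × C(Set.Icc (-h) (0:ℝ), ℝ) => f p.1 p.2)
      (Set.Icc 0 T ×ˢ Set.univ))
    (hfb : ∀ t ψ, |f t ψ| ≤ M) (hBφ : ∀ t, |φt t| ≤ Bφ) (w : C(ℝ, ℝ)) :
    ∀ t ≤ T, |PhiMap α h T c δ φt f w t| ≤ Bφ + c * (M * T ^ α / α) := by
  intro t ht
  unfold PhiMap
  have hm0 : (0:ℝ) ≤ max t 0 := le_max_right _ _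
  have hgc : ContinuousOn (fun s => f (min s T) (histMap h w (min s T - δ)))
      (uIcc 0 (max t 0)) := by
    refine (gw_cont hT hf δ w).mono ?_
    rw [uIcc_of_le hm0]
    exact fun x hx => hx.1
  have hint : IntervalIntegrable
      (fun s => (max t 0 - s) ^ (α - 1) * f (min s T) (histMap h w (min s T - δ)))
      MeasureTheory.volume 0 (max t 0) :=
    (kern_intable hα 0 (max t 0) (max t 0)).mul_continuousOn hgc
  have hJ := kern_abs_le hα hm0 le_rfl hint (fun s _ => hfb _ _)
  rw [sub_zero, sub_self, Real.zero_rpow hα.ne'] at hJ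
  have hmT : (max t 0) ^ α ≤ T ^ α :=
    Real.rpow_le_rpow hm0 (max_le ht hT.le) hα.le
  calc |φt t + c * _| ≤ |φt t| + |c * _| := abs_add_le _ _
    _ ≤ Bφ + c * (M * T ^ α / α) := by
        refine add_le_add (hBφ t) ?_
        rw [abs_mul, abs_of_nonneg hc]
        refine mul_le_mul_of_nonneg_left (hJ.trans ?_) hc
        have : M * ((max t 0) ^ α - 0) / α ≤ M * T ^ α / α := by
          rw [sub_zero]
          gcongr
        simpa using this

lemma PhiMap_local (hδ : 0 < δ) {w w' : C(ℝ, ℝ)} {a : ℝ} (ha : 0 ≤ a)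
    (hww : ∀ x ≤ a, w x = w' x) :
    ∀ t ≤ a + δ, PhiMap α h T c δ φt f w t = PhiMap α h T c δ φt f w' t := by
  intro t ht
  unfold PhiMap
  congr 1
  congr 1
  apply intervalIntegral.integral_congr
  intro s hs
  rw [uIcc_of_le (le_max_right t 0)] at hs
  have hhist : histMap h w (min s T - δ) = histMap h w' (min s T - δ) := by
    apply ContinuousMap.ext
    intro θ
    simp only [histMap_apply]
    apply hww
    have h1 : s ≤ a + δ := hs.2.trans (max_le (ht) (by linarith))
    have h2 : min s T ≤ s := min_le_left _ _
    have h3 : θ.1 ≤ 0 := θ.2.2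
    linarith
  simp only [hhist]

end PhiAux
section PhiAux2

variable {h T : ℝ} {f : ℝ → C(Set.Icc (-h) (0:ℝ), ℝ) → ℝ}

/-- continuity of the un-clamped integrand on `Icc 0 T` -/
lemma gw2_cont (hT : 0 < T)
    (hf : ContinuousOn (fun p : ℝ × C(Set.Icc (-h) (0:ℝ), ℝ) => f p.1 p.2)
      (Set.Icc 0 T ×ˢ Set.univ)) (δ : ℝ) (w : C(ℝ, ℝ)) :
    ContinuousOn (fun s => f s (histMap h w (s - δ))) (Icc 0 T) := by
  have hc : Continuous (fun s : ℝ => ((s, histMap h w (s - δ)) :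
      ℝ × C(Set.Icc (-h) (0:ℝ), ℝ))) :=
    continuous_id.prodMk ((histMap h w).continuous.comp (continuous_id.sub continuous_const))
  exact hf.comp hc.continuousOn (fun s hs => ⟨hs, Set.mem_univ _⟩)

end PhiAux2

/-- modulus tendsto lemma for equicontinuity -/
lemma omega_tendsto {α : ℝ} (hα : 0 < α) {φt : ℝ → ℝ} (hφt : Continuous φt) (x C : ℝ) :
    Filter.Tendsto (fun y => |φt x - φt y|
      + C * (|(max x 0) ^ α - (max y 0) ^ α| + 2 * |max x 0 - max y 0| ^ α))
      (nhds x) (nhds 0) := by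
  have hmax : Filter.Tendsto (fun y : ℝ => max y 0) (nhds x) (nhds (max x 0)) :=
    (continuous_max.comp (continuous_id.prodMk continuous_const)).continuousAt
  have hxα : ContinuousAt (fun z : ℝ => z ^ α) (max x 0) := by
    rcases (le_max_right x 0).lt_or_eq with hlt | heq
    · exact Real.continuousAt_rpow_const _ _ (Or.inl hlt.ne')
    · rw [← heq]; exact Real.continuousAt_rpow_const _ _ (Or.inr hα.le)
  have h1 : Filter.Tendsto (fun y => |φt x - φt y|) (nhds x) (nhds 0) := by
    have := (hφt.tendsto x).const_sub (φt x)
    simpa [Function.comp_def] using (continuous_abs.tendsto (0:ℝ)).comp (by simpa using this)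
  have h2 : Filter.Tendsto (fun y => |(max x 0) ^ α - (max y 0) ^ α|) (nhds x) (nhds 0) := by
    have := (hxα.tendsto.comp hmax).const_sub ((max x 0) ^ α)
    simpa [Function.comp_def] using (continuous_abs.tendsto (0:ℝ)).comp (by simpa using this)
  have h3 : Filter.Tendsto (fun y => |max x 0 - max y 0| ^ α) (nhds x) (nhds 0) := by
    have habs : Filter.Tendsto (fun y : ℝ => |max x 0 - max y 0|) (nhds x) (nhds 0) := by
      have := hmax.const_sub (max x 0)
      simpa [Function.comp_def] using (continuous_abs.tendsto (0:ℝ)).comp (by simpa using this)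
    have h0 : ContinuousAt (fun z : ℝ => z ^ α) 0 :=
      Real.continuousAt_rpow_const _ _ (Or.inr hα.le)
    have := h0.tendsto.comp habs
    simpa [Function.comp_def, Real.zero_rpow hα.ne'] using this
  have := h1.add ((h2.add (h3.const_mul 2)).const_mul C)
  simpa using this

set_option maxHeartbeats 4000000 in
/-- Global existence for the integral form of the Caputo fractional functional
differential equation with continuous bounded right-hand side. -/
theorem exists_solution_of_bounded (α T h M : ℝ) (hα : 0 < α) (hT : 0 < T) (hh : 0 < h)
    (φ : ℝ → ℝ) (hφ : ContinuousOn φ (Set.Icc (-h) 0))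
    (f : ℝ → C(Set.Icc (-h) (0:ℝ), ℝ) → ℝ)
    (hf : ContinuousOn (fun p : ℝ × C(Set.Icc (-h) (0:ℝ), ℝ) => f p.1 p.2)
      (Set.Icc 0 T ×ˢ Set.univ))
    (hfb : ∀ t : ℝ, ∀ ψ : C(Set.Icc (-h) (0:ℝ), ℝ), |f t ψ| ≤ M) :
    ∃ u : ℝ → ℝ, ContinuousOn u (Set.Icc (-h) T) ∧
      (∀ t ∈ Set.Icc (-h) (0:ℝ), u t = φ t) ∧
      ∃ hist : ℝ → C(Set.Icc (-h) (0:ℝ), ℝ),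
        (∀ t ∈ Set.Icc (0:ℝ) T, ∀ θ : Set.Icc (-h) (0:ℝ), hist t θ = u (t + θ.1)) ∧
        ∀ t ∈ Set.Icc (0:ℝ) T,
          u t = φ 0 + (1 / Real.Gamma α) *
            ∫ s in (0:ℝ)..t, (t - s) ^ (α - 1) * f s (hist s) := by
  classical
  have hM : 0 ≤ M := le_trans (abs_nonneg _) (hfb 0 0)
  have hΓ : 0 < Real.Gamma α := Real.Gamma_pos_of_pos hα
  set c : ℝ := 1 / Real.Gamma α with hcdef
  have hc : 0 ≤ c := by positivity
  have hhT : -h ≤ T := by linarith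
  -- extended initial datum
  set φt : ℝ → ℝ := fun t => φ (max (-h) (min t 0)) with hφtdef
  have hclamp0mem : ∀ t : ℝ, max (-h) (min t 0) ∈ Icc (-h) (0:ℝ) := fun t =>
    ⟨le_max_left _ _, max_le (by linarith) (min_le_right _ _)⟩
  have hφtc : Continuous φt :=
    hφ.comp_continuous (continuous_const.max (continuous_id.min continuous_const)) hclamp0mem
  have hφt_eq : ∀ t ∈ Icc (-h) (0:ℝ), φt t = φ t := by
    intro t htt
    simp only [hφtdef]
    rw [min_eq_left htt.2, max_eq_right htt.1]
  have hφt0 : ∀ t : ℝ, 0 ≤ t → φt t = φ 0 := by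
    intro t htt
    simp only [hφtdef]
    rw [min_eq_right htt, max_eq_right (by linarith)]
  have hφtlow : ∀ t : ℝ, t ≤ -h → φt t = φ (-h) := by
    intro t htt
    simp only [hφtdef]
    rw [min_eq_left (by linarith), max_eq_left (by linarith)]
  obtain ⟨Bφ, hBφ0⟩ := isCompact_Icc.exists_bound_of_continuousOn hφ
  have hBφ : ∀ t : ℝ, |φt t| ≤ Bφ := by
    intro t
    have := hBφ0 _ (hclamp0mem t)
    simpa [Real.norm_eq_abs] using this
  -- delays
  set δ : ℕ → ℝ := fun n => T / (n + 1) with hδdef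
  have hδpos : ∀ n, 0 < δ n := fun n => by positivity
  have hδleT : ∀ n, δ n ≤ T := by
    intro n
    rw [hδdef]
    rw [div_le_iff₀ (by positivity)]
    nlinarith [Nat.cast_nonneg (α := ℝ) n]
  -- the approximation operator and its iterates
  set Φn : ℕ → C(ℝ, ℝ) → C(ℝ, ℝ) := fun n w =>
    ⟨PhiMap α h T c (δ n) φt f w, PhiMap_cont hα hT hM hf hfb hφtc c (δ n) w⟩ with hΦdef
  set U : ℕ → C(ℝ, ℝ) := fun n => (Φn n)^[n + 2] ⟨φt, hφtc⟩ with hUdef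
  have hUphi : ∀ n, ∃ w : C(ℝ, ℝ), U n = Φn n w := by
    intro n
    refine ⟨(Φn n)^[n + 1] ⟨φt, hφtc⟩, ?_⟩
    rw [hUdef]
    exact (Function.iterate_succ_apply' (Φn n) (n + 1) _)
  have hUpast : ∀ n, ∀ t : ℝ, t ≤ 0 → U n t = φt t := by
    intro n t htt
    obtain ⟨w, hw⟩ := hUphi n
    rw [hw]
    exact PhiMap_past w htt
  -- stabilization
  have hstab : ∀ (n k : ℕ), ∀ t : ℝ, t ≤ (k : ℝ) * δ n →
      ((Φn n)^[k + 1] ⟨φt, hφtc⟩) t = ((Φn n)^[k + 2] ⟨φt, hφtc⟩) t := by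
    intro n k
    induction k with
    | zero =>
        intro t htt
        simp only [Nat.cast_zero, zero_mul] at htt
        show (Φn n ⟨φt, hφtc⟩) t = ((Φn n)^[2] ⟨φt, hφtc⟩) t
        rw [show (2 : ℕ) = 1 + 1 from rfl, Function.iterate_succ_apply']
        show PhiMap α h T c (δ n) φt f _ t = PhiMap α h T c (δ n) φt f _ t
        rw [PhiMap_past _ htt, PhiMap_past _ htt]
    | succ k ih =>
        intro t htt
        have e1 : (Φn n)^[(k + 1) + 1] ⟨φt, hφtc⟩ = Φn n ((Φn n)^[k + 1] ⟨φt, hφtc⟩) :=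
          Function.iterate_succ_apply' _ _ _
        have e2 : (Φn n)^[(k + 1) + 2] ⟨φt, hφtc⟩ = Φn n ((Φn n)^[k + 2] ⟨φt, hφtc⟩) := by
          rw [show (k + 1) + 2 = (k + 2) + 1 from by ring]
          exact Function.iterate_succ_apply' _ _ _
        rw [e1, e2]
        refine PhiMap_local (hδpos n) (a := (k : ℝ) * δ n)
          (by positivity) (fun x hx => ih x hx) t ?_
        push_cast at htt ⊢
        linarith
  have hUeq : ∀ n, ∀ t : ℝ, t ≤ T → U n t = PhiMap α h T c (δ n) φt f (U n) t := by
    intro n t htt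
    have hTeq : ((n : ℝ) + 1) * δ n = T := by
      rw [hδdef]
      field_simp
    have := hstab n (n + 1) t (by push_cast; rw [show ((n:ℝ)+1) * δ n = T from hTeq] at *; linarith)
    have e2 : (Φn n)^[(n + 1) + 2] ⟨φt, hφtc⟩ = Φn n ((Φn n)^[n + 2] ⟨φt, hφtc⟩) := by
      rw [show (n + 1) + 2 = (n + 2) + 1 from by ring]
      exact Function.iterate_succ_apply' _ _ _
    calc U n t = ((Φn n)^[(n+1) + 1] ⟨φt, hφtc⟩) t := rfl
      _ = ((Φn n)^[(n+1) + 2] ⟨φt, hφtc⟩) t := this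
      _ = (Φn n ((Φn n)^[n+2] ⟨φt, hφtc⟩)) t := by rw [e2]
      _ = PhiMap α h T c (δ n) φt f (U n) t := rfl
  -- uniform bound and modulus
  set B : ℝ := Bφ + c * (M * T ^ α / α) with hBdef
  have hUbd : ∀ n, ∀ t : ℝ, t ≤ T → |U n t| ≤ B := by
    intro n t htt
    obtain ⟨w, hw⟩ := hUphi n
    rw [hw]
    exact PhiMap_bound hα hT hM hc hf hfb hBφ w t htt
  have hUdiff : ∀ n (s t : ℝ), |U n s - U n t| ≤ |φt s - φt t|
      + c * (M / α * (|(max s 0) ^ α - (max t 0) ^ α| + 2 * |max s 0 - max t 0| ^ α)) := by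
    intro n s t
    obtain ⟨w, hw⟩ := hUphi n
    rw [hw]
    exact PhiMap_diff hα hT hM hc hf hfb w s t
  -- restriction to the compact interval
  haveI hXcomp : CompactSpace ↥(Icc (-h) T) := isCompact_iff_compactSpace.mp isCompact_Icc
  set res : ℕ → (↥(Icc (-h) T) →ᵇ ℝ) := fun n =>
    BoundedContinuousFunction.mkOfCompact ((U n).restrict (Icc (-h) T)) with hresdef
  have hres_apply : ∀ n (x : ↥(Icc (-h) T)), res n x = U n x.1 := fun n x => rfl
  set A : Set (↥(Icc (-h) T) →ᵇ ℝ) := Set.range res with hAdef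
  have hA_in : ∀ (g : ↥(Icc (-h) T) →ᵇ ℝ) (x : ↥(Icc (-h) T)), g ∈ A → g x ∈ Icc (-B) B := by
    rintro g x ⟨n, rfl⟩
    rw [hres_apply]
    exact abs_le.1 (hUbd n x.1 x.2.2)
  have hA_eq : Equicontinuous ((↑) : A → ↥(Icc (-h) T) → ℝ) := by
    intro x
    rw [Metric.equicontinuousAt_iff_right]
    intro ε hε
    have hΘ := omega_tendsto hα hφtc x.1 (c * (M / α))
    have hev : ∀ᶠ y in nhds x.1, (|φt x.1 - φt y|
        + c * (M / α) * (|(max x.1 0) ^ α - (max y 0) ^ α|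
          + 2 * |max x.1 0 - max y 0| ^ α)) < ε := hΘ.eventually (gt_mem_nhds hε)
    have hsub : Filter.Tendsto (Subtype.val : ↥(Icc (-h) T) → ℝ) (nhds x) (nhds x.1) :=
      continuousAt_subtype_val
    filter_upwards [hsub.eventually hev] with y hy i
    obtain ⟨n, hn⟩ := i.2
    have : dist ((i : ↥(Icc (-h) T) →ᵇ ℝ) x) ((i : ↥(Icc (-h) T) →ᵇ ℝ) y)
        = |U n x.1 - U n y.1| := by
      rw [← hn, hres_apply, hres_apply, Real.dist_eq]
    rw [this]
    refine lt_of_le_of_lt ((hUdiff n x.1 y.1).trans (le_of_eq ?_)) hy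
    ring
  have hKA : IsCompact (closure A) :=
    BoundedContinuousFunction.arzela_ascoli (Icc (-B) B) isCompact_Icc A hA_in hA_eq
  obtain ⟨v, hvA, ψ, hψmono, hψtend⟩ :=
    hKA.tendsto_subseq (fun n => subset_closure (Set.mem_range_self (f := res) n))
  -- the limit function
  have hclampXmem : ∀ t : ℝ, max (-h) (min t T) ∈ Icc (-h) T := fun t =>
    ⟨le_max_left _ _, max_le hhT (min_le_right _ _)⟩
  set clampX : ℝ → ↥(Icc (-h) T) := fun t => ⟨max (-h) (min t T), hclampXmem t⟩ with hclampXdef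
  have hclampXc : Continuous clampX :=
    Continuous.subtype_mk (continuous_const.max (continuous_id.min continuous_const)) _
  have hclampX_id : ∀ t ∈ Icc (-h) T, (clampX t).1 = t := by
    intro t htt
    simp only [hclampXdef]
    rw [min_eq_left htt.2, max_eq_right htt.1]
  set u : ℝ → ℝ := fun t => v (clampX t) with hudef
  have hucont : Continuous u := v.continuous.comp hclampXc
  set uC : C(ℝ, ℝ) := ⟨u, hucont⟩ with huCdef
  -- approximation below T
  have hres_eq : ∀ n, ∀ t : ℝ, t ≤ T → U n t = res n (clampX t) := by
    intro n t htt
    rcases le_total (-h) t with hht | hht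
    · rw [hres_apply, hclampX_id t ⟨hht, htt⟩]
    · have h1 : (clampX t).1 = -h := by
        simp only [hclampXdef]
        rw [min_eq_left (by linarith), max_eq_left (by linarith)]
      rw [hres_apply, h1, hUpast n t (by linarith), hUpast n (-h) (by linarith),
        hφtlow t hht, hφtlow (-h) le_rfl]
  have hD : ∀ k, ∀ t : ℝ, t ≤ T → |U (ψ k) t - u t| ≤ dist (res (ψ k)) v := by
    intro k t htt
    calc |U (ψ k) t - u t| = dist (res (ψ k) (clampX t)) (v (clampX t)) := by
          rw [hres_eq (ψ k) t htt, Real.dist_eq, hudef]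
      _ ≤ dist (res (ψ k)) v := BoundedContinuousFunction.dist_coe_le_dist _
  have hDtend : Filter.Tendsto (fun k => dist (res (ψ k)) v) Filter.atTop (nhds 0) := by
    rw [← tendsto_iff_dist_tendsto_zero] at *
    exact hψtend
  have hUtend : ∀ t : ℝ, t ≤ T → Filter.Tendsto (fun k => U (ψ k) t) Filter.atTop (nhds (u t)) := by
    intro t htt
    rw [tendsto_iff_dist_tendsto_zero]
    exact squeeze_zero (fun k => dist_nonneg)
      (fun k => by rw [Real.dist_eq]; exact hD k t htt) hDtend
  have hu_past : ∀ t ∈ Icc (-h) (0:ℝ), u t = φ t := by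
    intro t htt
    have h1 : Filter.Tendsto (fun k => U (ψ k) t) Filter.atTop (nhds (φt t)) := by
      have : ∀ k, U (ψ k) t = φt t := fun k => hUpast (ψ k) t htt.2
      simp only [this]
      exact tendsto_const_nhds
    rw [← hφt_eq t htt]
    exact tendsto_nhds_unique (hUtend t (htt.2.trans hT.le)) h1
  -- the compact set of histories
  set shiftC : C(ℝ, C(Set.Icc (-h) (0:ℝ), ↥(Icc (-h) T))) := ContinuousMap.curry
    ⟨fun p : ℝ × Set.Icc (-h) (0:ℝ) => clampX (p.1 + p.2.1),
      hclampXc.comp (continuous_fst.add (continuous_subtype_val.comp continuous_snd))⟩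
    with hshiftdef
  set Hc : (↥(Icc (-h) T) →ᵇ ℝ) × ℝ → C(Set.Icc (-h) (0:ℝ), ℝ) := fun q =>
    q.1.toContinuousMap.comp (shiftC q.2) with hHcdef
  have hHc_apply : ∀ q (θ : Set.Icc (-h) (0:ℝ)), Hc q θ = q.1 (clampX (q.2 + θ.1)) :=
    fun q θ => rfl
  have htoCM : Continuous (fun g : ↥(Icc (-h) T) →ᵇ ℝ => g.toContinuousMap) :=
    (ContinuousMap.isometryEquivBoundedOfCompact ↥(Icc (-h) T) ℝ).symm.continuous
  have hHc_cont : Continuous Hc :=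
    ContinuousMap.continuous_comp'.comp
      ((shiftC.continuous.comp continuous_snd).prodMk (htoCM.comp continuous_fst))
  set K : Set C(Set.Icc (-h) (0:ℝ), ℝ) := Hc '' ((closure A) ×ˢ (Icc (-T) T : Set ℝ))
    with hKdef
  have hKcomp : IsCompact K := (hKA.prod isCompact_Icc).image hHc_cont
  have hmem1 : ∀ n, ∀ σ ∈ (Icc (-T) T : Set ℝ), histMap h (U n) σ ∈ K := by
    intro n σ hσ
    refine ⟨(res n, σ), ⟨subset_closure (Set.mem_range_self n), hσ⟩, ?_⟩
    apply ContinuousMap.ext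
    intro θ
    rw [hHc_apply]
    simp only [histMap_apply]
    exact (hres_eq n (σ + θ.1) (by nlinarith [θ.2.2, hσ.2])).symm
  have hmem2 : ∀ σ ∈ (Icc (-T) T : Set ℝ), histMap h uC σ ∈ K := by
    intro σ hσ
    exact ⟨(v, σ), ⟨hvA, hσ⟩, rfl⟩
  -- uniform continuity of f on the compact set
  have hfUC : UniformContinuousOn (fun p : ℝ × C(Set.Icc (-h) (0:ℝ), ℝ) => f p.1 p.2)
      ((Icc 0 T : Set ℝ) ×ˢ K) :=
    (isCompact_Icc.prod hKcomp).uniformContinuousOn_of_continuous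
      (hf.mono (fun p hp => ⟨hp.1, Set.mem_univ _⟩))
  -- uniform continuity of the limit function
  have huUC : UniformContinuous u := by
    have h1 : UniformContinuous v := CompactSpace.uniformContinuous_of_continuous v.continuous
    have h2 : UniformContinuous clampX := by
      rw [Metric.uniformContinuous_iff]
      intro ε hε
      refine ⟨ε, hε, fun {a b} hab => ?_⟩
      have hle : dist (clampX a) (clampX b) ≤ dist a b := by
        rw [Subtype.dist_eq]
        show dist (max (-h) (min a T)) (max (-h) (min b T)) ≤ dist a b
        rw [Real.dist_eq, Real.dist_eq, max_comm (-h) (min a T), max_comm (-h) (min b T)]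
        refine (abs_max_sub_max_le_abs _ _ _).trans ?_
        refine (abs_min_sub_min_le_max a T b T).trans ?_
        simp [abs_nonneg]
      exact lt_of_le_of_lt hle hab
    exact h1.comp h2
  -- convergence of the delays
  have hδψtend : Filter.Tendsto (fun k => δ (ψ k)) Filter.atTop (nhds 0) := by
    have h1 : Filter.Tendsto (fun n : ℕ => T / ((n : ℝ) + 1)) Filter.atTop (nhds 0) := by
      have := (Filter.tendsto_add_atTop_iff_nat 1).2 (tendsto_const_div_atTop_nhds_zero_nat T)
      simpa [Nat.cast_add, Nat.cast_one] using this
    exact h1.comp hψmono.tendsto_atTop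
  -- conclusion
  refine ⟨u, hucont.continuousOn, hu_past, fun t => histMap h uC t, fun t ht θ => rfl, ?_⟩
  intro t ht
  -- the equation for the approximations
  have hEk : ∀ k, U (ψ k) t = φ 0 + c * ∫ s in (0:ℝ)..t,
      (t - s) ^ (α - 1) * f s (histMap h (U (ψ k)) (s - δ (ψ k))) := by
    intro k
    rw [hUeq (ψ k) t ht.2]
    unfold PhiMap
    rw [max_eq_left ht.1, hφt0 t ht.1]
    congr 1
    congr 1
    apply intervalIntegral.integral_congr
    intro s hs
    rw [uIcc_of_le ht.1] at hs
    simp only [min_eq_left (hs.2.trans ht.2)]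
  -- the uniform closeness of integrands
  have hkey : ∀ ε > 0, ∀ᶠ k in Filter.atTop, ∀ s ∈ Icc (0:ℝ) t,
      |f s (histMap h (U (ψ k)) (s - δ (ψ k))) - f s (histMap h uC s)| ≤ ε := by
    intro ε hε
    obtain ⟨d, hd, hdf⟩ := Metric.uniformContinuousOn_iff.1 hfUC ε hε
    obtain ⟨d2, hd2, hu2⟩ := Metric.uniformContinuous_iff.1 huUC (d/3) (by linarith)
    have hDsmall : ∀ᶠ k in Filter.atTop, dist (res (ψ k)) v < d/3 :=
      hDtend.eventually (gt_mem_nhds (by linarith))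
    have hδsmall : ∀ᶠ k in Filter.atTop, δ (ψ k) < d2 :=
      hδψtend.eventually (gt_mem_nhds hd2)
    filter_upwards [hDsmall, hδsmall] with k hk1 hk2
    intro s hs
    have hsT : s ∈ Icc (0:ℝ) T := ⟨hs.1, hs.2.trans ht.2⟩
    have hσmem : s - δ (ψ k) ∈ Icc (-T) T := by
      constructor
      · have := hδleT (ψ k)
        linarith [hs.1]
      · linarith [hsT.2, hδpos (ψ k)]
    have hsmem : s ∈ Icc (-T) T := ⟨by linarith [hs.1], hsT.2⟩
    have hdistH : dist (histMap h (U (ψ k)) (s - δ (ψ k))) (histMap h uC s)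
        ≤ dist (res (ψ k)) v + d/3 := by
      rw [ContinuousMap.dist_le (by positivity)]
      intro θ
      have hτ : s - δ (ψ k) + θ.1 ≤ T := by nlinarith [θ.2.2, hsT.2, hδpos (ψ k)]
      calc dist (histMap h (U (ψ k)) (s - δ (ψ k)) θ) (histMap h uC s θ)
          = |U (ψ k) (s - δ (ψ k) + θ.1) - u (s + θ.1)| := by
            simp only [histMap_apply, huCdef, Real.dist_eq]; rfl
        _ ≤ |U (ψ k) (s - δ (ψ k) + θ.1) - u (s - δ (ψ k) + θ.1)|
            + |u (s - δ (ψ k) + θ.1) - u (s + θ.1)| := abs_sub_le _ _ _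
        _ ≤ dist (res (ψ k)) v + d/3 := by
            refine add_le_add (hD k _ hτ) ?_
            have : dist (s - δ (ψ k) + θ.1) (s + θ.1) < d2 := by
              rw [Real.dist_eq]
              have : |s - δ (ψ k) + θ.1 - (s + θ.1)| = δ (ψ k) := by
                rw [show s - δ (ψ k) + θ.1 - (s + θ.1) = -(δ (ψ k)) from by ring,
                  abs_neg, abs_of_pos (hδpos (ψ k))]
              rw [this]
              exact hk2
            have := hu2 this
            rw [Real.dist_eq] at this
            exact this.le
    have hmemp1 : ((s, histMap h (U (ψ k)) (s - δ (ψ k))) :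
        ℝ × C(Set.Icc (-h) (0:ℝ), ℝ)) ∈ (Icc 0 T : Set ℝ) ×ˢ K :=
      ⟨hsT, hmem1 (ψ k) _ hσmem⟩
    have hmemp2 : ((s, histMap h uC s) : ℝ × C(Set.Icc (-h) (0:ℝ), ℝ))
        ∈ (Icc 0 T : Set ℝ) ×ˢ K := ⟨hsT, hmem2 s hsmem⟩
    have hdistp : dist ((s, histMap h (U (ψ k)) (s - δ (ψ k))) :
        ℝ × C(Set.Icc (-h) (0:ℝ), ℝ)) ((s, histMap h uC s)) < d := by
      rw [Prod.dist_eq]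
      simp only [dist_self]
      rw [max_eq_right dist_nonneg]
      calc dist (histMap h (U (ψ k)) (s - δ (ψ k))) (histMap h uC s)
          ≤ dist (res (ψ k)) v + d/3 := hdistH
        _ < d/3 + d/3 := by linarith
        _ < d := by linarith
    have := hdf _ hmemp1 _ hmemp2 hdistp
    rw [Real.dist_eq] at this
    exact this.le
  -- continuity of the integrands
  have hgkcont : ∀ k, ContinuousOn (fun s => f s (histMap h (U (ψ k)) (s - δ (ψ k))))
      (Icc 0 T) := fun k => gw2_cont hT hf (δ (ψ k)) (U (ψ k))
  have hgLcont : ContinuousOn (fun s => f s (histMap h uC s)) (Icc 0 T) := by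
    have := gw2_cont hT hf 0 uC
    simpa using this
  have hsubI : uIcc (0:ℝ) t ⊆ Icc 0 T := by
    rw [uIcc_of_le ht.1]
    exact Icc_subset_Icc le_rfl ht.2
  have int2 : IntervalIntegrable (fun s => (t - s) ^ (α - 1) * f s (histMap h uC s))
      volume 0 t := (kern_intable hα 0 t t).mul_continuousOn (hgLcont.mono hsubI)
  have int1 : ∀ k, IntervalIntegrable
      (fun s => (t - s) ^ (α - 1) * f s (histMap h (U (ψ k)) (s - δ (ψ k)))) volume 0 t :=
    fun k => (kern_intable hα 0 t t).mul_continuousOn ((hgkcont k).mono hsubI)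
  have intdiff : ∀ k, IntervalIntegrable (fun s => (t - s) ^ (α - 1) *
      (f s (histMap h (U (ψ k)) (s - δ (ψ k))) - f s (histMap h uC s))) volume 0 t :=
    fun k => (kern_intable hα 0 t t).mul_continuousOn
      (((hgkcont k).sub hgLcont).mono hsubI)
  have htα : 0 ≤ t ^ α := Real.rpow_nonneg ht.1 _
  have hRtend : Filter.Tendsto (fun k => U (ψ k) t) Filter.atTop
      (nhds (φ 0 + c * ∫ s in (0:ℝ)..t, (t - s) ^ (α - 1) * f s (histMap h uC s))) := by
    rw [Metric.tendsto_atTop]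
    intro ε' hε'
    have hden : 0 < (c + 1) * (t ^ α + 1) := mul_pos (by linarith) (by linarith)
    set ε : ℝ := ε' * α / ((c + 1) * (t ^ α + 1)) with hεdef
    have hεpos : 0 < ε := div_pos (mul_pos hε' hα) hden
    obtain ⟨N, hN⟩ := Filter.eventually_atTop.1 (hkey ε hεpos)
    refine ⟨N, fun k hk => ?_⟩
    have hsub : (∫ s in (0:ℝ)..t, (t - s) ^ (α - 1) * f s (histMap h (U (ψ k)) (s - δ (ψ k))))
        - (∫ s in (0:ℝ)..t, (t - s) ^ (α - 1) * f s (histMap h uC s))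
        = ∫ s in (0:ℝ)..t, (t - s) ^ (α - 1) *
          (f s (histMap h (U (ψ k)) (s - δ (ψ k))) - f s (histMap h uC s)) := by
      rw [← intervalIntegral.integral_sub (int1 k) int2]
      apply intervalIntegral.integral_congr
      intro s hs
      simp only
      ring
    have hbound := kern_abs_le hα (a := 0) (b := t) (c := t) ht.1 le_rfl (intdiff k)
      (fun s hs => hN k hk s hs)
    rw [sub_zero, sub_self, Real.zero_rpow hα.ne'] at hbound
    have harith : c * (ε * ((t ^ α - 0) / α)) < ε' := by
      rw [hεdef, show c * (ε' * α / ((c + 1) * (t ^ α + 1)) * ((t ^ α - 0) / α))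
        = ε' * (c * t ^ α) / ((c + 1) * (t ^ α + 1)) from by field_simp; ring]
      rw [div_lt_iff₀ hden]
      have hlt : c * t ^ α < (c + 1) * (t ^ α + 1) := by nlinarith
      exact mul_lt_mul_of_pos_left hlt hε'
    rw [hEk k, Real.dist_eq]
    rw [show (φ 0 + c * ∫ s in (0:ℝ)..t, (t - s) ^ (α - 1) *
          f s (histMap h (U (ψ k)) (s - δ (ψ k))))
        - (φ 0 + c * ∫ s in (0:ℝ)..t, (t - s) ^ (α - 1) * f s (histMap h uC s))
        = c * ((∫ s in (0:ℝ)..t, (t - s) ^ (α - 1) * f s (histMap h (U (ψ k)) (s - δ (ψ k))))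
          - ∫ s in (0:ℝ)..t, (t - s) ^ (α - 1) * f s (histMap h uC s)) from by ring]
    rw [abs_mul, abs_of_nonneg hc, hsub]
    calc c * |∫ s in (0:ℝ)..t, (t - s) ^ (α - 1) *
          (f s (histMap h (U (ψ k)) (s - δ (ψ k))) - f s (histMap h uC s))|
        ≤ c * (ε * ((t ^ α - 0) / α)) := by
          refine mul_le_mul_of_nonneg_left ?_ hc
          calc |∫ s in (0:ℝ)..t, (t - s) ^ (α - 1) *
              (f s (histMap h (U (ψ k)) (s - δ (ψ k))) - f s (histMap h uC s))|
              ≤ ε * (t ^ α - 0) / α := hbound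
            _ = ε * ((t ^ α - 0) / α) := by ring
      _ < ε' := harith
  exact tendsto_nhds_unique (hUtend t ht.2) hRtend
end

section
/- Let α > 0, T > 0, h > 0, let f : [0,T] × C([−h,0], ℝ) → ℝ be continuous, and let B be a bounded subset of C([0,T], ℝ). Fix φ ∈ C([−h,0], ℝ) and define J : C([0,T], ℝ) → C([0,T], ℝ) by (Jx)(t) = φ(0) + (1/Γ(α)) ∫_0^t (t−s)^{α−1} f(s, x̃_s) ds, where x̃ extends x by φ on [−h,0] and x̃_s(θ) = x̃(s+θ). Then J restricted to B is continuous with respect to the supremum norm. -/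
open Set intervalIntegral MeasureTheory

lemma glue_cont (h T : ℝ) (hT : 0 < T) (hh : 0 < h)
    (φ z : ℝ → ℝ) (hφ : ContinuousOn φ (Set.Icc (-h) 0))
    (hz : ContinuousOn z (Set.Icc 0 T)) (hz0 : z 0 = φ 0) :
    ContinuousOn (fun r => if r < 0 then φ r else z r) (Set.Icc (-h) T) := by
  apply ContinuousOn.if
  · intro a ha
    have : a = 0 := by
      have := ha.2
      rw [show {a : ℝ | a < 0} = Set.Iio 0 from rfl, frontier_Iio] at this
      simpa using this
    simp [this, hz0]
  · have : Set.Icc (-h) T ∩ closure {a : ℝ | a < 0} = Set.Icc (-h) 0 := by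
      rw [show {a : ℝ | a < 0} = Set.Iio 0 from rfl, closure_Iio]
      ext r; simp only [Set.mem_inter_iff, Set.mem_Icc, Set.mem_Iic]
      constructor
      · rintro ⟨⟨h1, _⟩, h3⟩; exact ⟨h1, h3⟩
      · rintro ⟨h1, h2⟩; exact ⟨⟨h1, h2.trans hT.le⟩, h2⟩
    rw [this]; exact hφ
  · have : Set.Icc (-h) T ∩ closure {a : ℝ | ¬ a < 0} = Set.Icc 0 T := by
      have e1 : {a : ℝ | ¬ a < 0} = Set.Ici 0 := by ext r; simp [not_lt]
      rw [e1, closure_Ici]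
      ext r; simp only [Set.mem_inter_iff, Set.mem_Icc, Set.mem_Ici]
      constructor
      · rintro ⟨⟨_, h2⟩, h3⟩; exact ⟨h3, h2⟩
      · rintro ⟨h1, h2⟩; exact ⟨⟨le_trans (by linarith) h1, h2⟩, h1⟩
    rw [this]; exact hz

lemma hist_cont (h T : ℝ) (hT : 0 < T) (hh : 0 < h)
    (φ z : ℝ → ℝ) (hφ : ContinuousOn φ (Set.Icc (-h) 0))
    (hz : ContinuousOn z (Set.Icc 0 T)) (hz0 : z 0 = φ 0)
    (H : ℝ → C(Set.Icc (-h) (0:ℝ), ℝ))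
    (hH : ∀ s ∈ Set.Icc (0:ℝ) T, ∀ θ : Set.Icc (-h) (0:ℝ),
      H s θ = if s + θ.1 < 0 then φ (s + θ.1) else z (s + θ.1)) :
    ContinuousOn H (Set.Icc 0 T) := by
  have hgc : ContinuousOn (fun r => if r < 0 then φ r else z r) (Set.Icc (-h) T) :=
    glue_cont h T hT hh φ z hφ hz hz0
  have hgu := (isCompact_Icc (a := -h) (b := T)).uniformContinuousOn_of_continuous hgc
  rw [Metric.uniformContinuousOn_iff] at hgu
  rw [Metric.continuousOn_iff]
  intro s hs ε hε
  obtain ⟨δ, hδ, hd⟩ := hgu (ε/2) (by linarith)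
  refine ⟨δ, hδ, fun s' hs' hss' => ?_⟩
  have key : dist (H s') (H s) ≤ ε/2 := by
    rw [ContinuousMap.dist_le (by linarith)]
    intro θ
    have hmem : ∀ u ∈ Set.Icc (0:ℝ) T, u + θ.1 ∈ Set.Icc (-h) T := by
      intro u hu
      exact ⟨by have := θ.2.1; have := hu.1; linarith,
             by have := θ.2.2; have := hu.2; linarith⟩
    rw [hH s' hs' θ, hH s hs θ]
    have hdθ : dist (s' + θ.1) (s + θ.1) < δ := by
      rw [Real.dist_eq]; rw [Real.dist_eq] at hss'; simpa using hss'
    exact le_of_lt (hd _ (hmem s' hs') _ (hmem s hs) hdθ)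
  linarith [key]

lemma unif_near_graph (T : ℝ) (hT : 0 < T) {E : Type*} [MetricSpace E]
    (f : ℝ → E → ℝ)
    (hf : ContinuousOn (fun p : ℝ × E => f p.1 p.2) (Set.Icc 0 T ×ˢ Set.univ))
    (Φ : ℝ → E) (hΦ : ContinuousOn Φ (Set.Icc 0 T))
    (ε₀ : ℝ) (hε₀ : 0 < ε₀) :
    ∃ δ > 0, ∀ s ∈ Set.Icc (0:ℝ) T, ∀ u : E, dist u (Φ s) < δ →
      |f s u - f s (Φ s)| < ε₀ := by
  rw [Metric.continuousOn_iff] at hΦ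
  have key : ∀ s : ℝ, ∃ d, 0 < d ∧ ∃ r, 0 < r ∧ r ≤ d/2 ∧ (s ∈ Set.Icc (0:ℝ) T →
      (∀ q : ℝ × E, q ∈ Set.Icc 0 T ×ˢ (Set.univ : Set E) → dist q (s, Φ s) < d →
        |f q.1 q.2 - f s (Φ s)| < ε₀/2) ∧
      (∀ s' ∈ Set.Icc (0:ℝ) T, dist s' s < r → dist (Φ s') (Φ s) < d/2)) := by
    intro s
    by_cases hs : s ∈ Set.Icc (0:ℝ) T
    · have hp : ((s, Φ s) : ℝ × E) ∈ Set.Icc 0 T ×ˢ (Set.univ : Set E) :=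
        ⟨hs, Set.mem_univ _⟩
      have hc := hf _ hp
      rw [Metric.continuousWithinAt_iff] at hc
      obtain ⟨d, hd, hdp⟩ := hc (ε₀/2) (by linarith)
      obtain ⟨r₂, hr₂, hr₂p⟩ := hΦ s hs (d/2) (by linarith)
      refine ⟨d, hd, min r₂ (d/2), lt_min hr₂ (by linarith), min_le_right _ _,
        fun _ => ⟨?_, ?_⟩⟩
      · intro q hq hqd
        have := hdp hq hqd
        rw [Real.dist_eq] at this
        exact this
      · intro s' hs' hss'
        exact hr₂p s' hs' (lt_of_lt_of_le hss' (min_le_left _ _))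
    · exact ⟨1, one_pos, 1/2, by norm_num, by norm_num, fun h => absurd h hs⟩
  choose d hd r hr hrd P using key
  have hcover : Set.Icc (0:ℝ) T ⊆ ⋃ s ∈ Set.Icc (0:ℝ) T, Metric.ball s (r s) :=
    fun s hs => Set.mem_biUnion hs (Metric.mem_ball_self (hr s))
  obtain ⟨b, hbsub, hbfin, hbcov⟩ := isCompact_Icc.elim_finite_subcover_image
    (fun s _ => Metric.isOpen_ball) hcover
  have hbne : b.Nonempty := by
    have h0 : (0:ℝ) ∈ Set.Icc (0:ℝ) T := ⟨le_refl _, hT.le⟩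
    obtain ⟨i, hi, -⟩ := Set.mem_iUnion₂.1 (hbcov h0)
    exact ⟨i, hi⟩
  set t := hbfin.toFinset with ht
  have htne : t.Nonempty := by rwa [ht, Set.Finite.toFinset_nonempty]
  refine ⟨t.inf' htne (fun i => d i / 2), ?_, ?_⟩
  · rw [gt_iff_lt, Finset.lt_inf'_iff]
    intro i _
    linarith [hd i]
  · intro s hs u hu
    obtain ⟨i, hi, hsi⟩ := Set.mem_iUnion₂.1 (hbcov hs)
    have hii : i ∈ Set.Icc (0:ℝ) T := hbsub hi
    have hsi' : dist s i < r i := Metric.mem_ball.1 hsi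
    obtain ⟨Q1, Q2⟩ := P i hii
    have hΦsi : dist (Φ s) (Φ i) < d i / 2 := Q2 s hs hsi'
    have hδle : t.inf' htne (fun i => d i / 2) ≤ d i / 2 :=
      Finset.inf'_le _ (by rwa [ht, Set.Finite.mem_toFinset])
    have h1 : |f s (Φ s) - f i (Φ i)| < ε₀/2 := by
      have := Q1 (s, Φ s) ⟨hs, Set.mem_univ _⟩ ?_
      · exact this
      · rw [Prod.dist_eq]
        exact max_lt (lt_of_lt_of_le hsi' (le_trans (hrd i) (by linarith [hd i])))
          (by linarith [hd i])
    have h2 : |f s u - f i (Φ i)| < ε₀/2 := by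
      have := Q1 (s, u) ⟨hs, Set.mem_univ _⟩ ?_
      · exact this
      · rw [Prod.dist_eq]
        refine max_lt (lt_of_lt_of_le hsi' (le_trans (hrd i) (by linarith [hd i]))) ?_
        calc dist u (Φ i) ≤ dist u (Φ s) + dist (Φ s) (Φ i) := dist_triangle _ _ _
          _ < d i / 2 + d i / 2 := by
              have : dist u (Φ s) < d i / 2 := lt_of_lt_of_le hu hδle
              linarith
          _ = d i := by ring
    calc |f s u - f s (Φ s)| ≤ |f s u - f i (Φ i)| + |f i (Φ i) - f s (Φ s)| :=
          abs_sub_le _ _ _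
      _ < ε₀/2 + ε₀/2 := add_lt_add h2 (by rwa [abs_sub_comm])
      _ = ε₀ := by ring


/-- Continuity (with respect to the supremum norm) of the Volterra operator
`(Jx)(t) = φ(0) + (1/Γ(α)) ∫₀ᵗ (t-s)^{α-1} f(s, x̃_s) ds` on a bounded set `B`,
where `x̃` extends `x` by `φ` on `[-h,0]` and `x̃_s` is the history segment. -/
theorem operator_continuous_on_bounded (α T h : ℝ) (hα : 0 < α) (hT : 0 < T) (hh : 0 < h)
    (φ : ℝ → ℝ) (hφ : ContinuousOn φ (Set.Icc (-h) 0))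
    (f : ℝ → C(Set.Icc (-h) (0:ℝ), ℝ) → ℝ)
    (hf : ContinuousOn (fun p : ℝ × C(Set.Icc (-h) (0:ℝ), ℝ) => f p.1 p.2)
      (Set.Icc 0 T ×ˢ Set.univ))
    (B : Set (ℝ → ℝ))
    (hBc : ∀ x ∈ B, ContinuousOn x (Set.Icc 0 T))
    (hB0 : ∀ x ∈ B, x 0 = φ 0)
    (hBb : ∃ M : ℝ, ∀ x ∈ B, ∀ t ∈ Set.Icc (0:ℝ) T, |x t| ≤ M)
    (hist : (ℝ → ℝ) → ℝ → C(Set.Icc (-h) (0:ℝ), ℝ))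
    (hhist : ∀ x ∈ B, ∀ s ∈ Set.Icc (0:ℝ) T, ∀ θ : Set.Icc (-h) (0:ℝ),
      hist x s θ = if s + θ.1 < 0 then φ (s + θ.1) else x (s + θ.1)) :
    ∀ x ∈ B, ∀ ε > 0, ∃ δ > 0, ∀ y ∈ B,
      (∀ t ∈ Set.Icc (0:ℝ) T, |x t - y t| < δ) →
      ∀ t ∈ Set.Icc (0:ℝ) T,
        |(φ 0 + (1 / Real.Gamma α) *
            ∫ s in (0:ℝ)..t, (t - s) ^ (α - 1) * f s (hist x s)) -
          (φ 0 + (1 / Real.Gamma α) *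
            ∫ s in (0:ℝ)..t, (t - s) ^ (α - 1) * f s (hist y s))| < ε := by
  intro x hx ε hε
  have hΓ : 0 < Real.Gamma α := Real.Gamma_pos_of_pos hα
  have hTα : 0 < T ^ α := Real.rpow_pos_of_pos hT α
  set C : ℝ := (1 / Real.Gamma α) * (T ^ α / α) with hCdef
  have hC : 0 < C := by positivity
  set ε₀ : ℝ := ε / (2 * C) with hε₀def
  have hε₀ : 0 < ε₀ := by positivity
  have hΦ : ContinuousOn (fun s => hist x s) (Set.Icc 0 T) :=
    hist_cont h T hT hh φ x hφ (hBc x hx) (hB0 x hx) _ (hhist x hx)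
  obtain ⟨δ₀, hδ₀, hδ₀p⟩ := unif_near_graph T hT f hf _ hΦ ε₀ hε₀
  refine ⟨δ₀ / 2, by linarith, ?_⟩
  intro y hy hxy t htmem
  have ht0 : (0:ℝ) ≤ t := htmem.1
  have htT : t ≤ T := htmem.2
  have hΦy : ContinuousOn (fun s => hist y s) (Set.Icc 0 T) :=
    hist_cont h T hT hh φ y hφ (hBc y hy) (hB0 y hy) _ (hhist y hy)
  -- distance between history segments
  have hdist : ∀ s ∈ Set.Icc (0:ℝ) T, dist (hist y s) (hist x s) ≤ δ₀ / 2 := by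
    intro s hs
    rw [ContinuousMap.dist_le (by linarith)]
    intro θ
    rw [hhist y hy s hs θ, hhist x hx s hs θ]
    by_cases hsθ : s + θ.1 < 0
    · simp only [hsθ, if_true]
      simp only [dist_self]
      linarith
    · simp only [hsθ, if_false]
      have hmem : s + θ.1 ∈ Set.Icc (0:ℝ) T :=
        ⟨not_lt.1 hsθ, by have := θ.2.2; have := hs.2; linarith⟩
      rw [Real.dist_eq, abs_sub_comm]
      exact le_of_lt (hxy _ hmem)
  have hFdiff : ∀ s ∈ Set.Icc (0:ℝ) T, |f s (hist x s) - f s (hist y s)| ≤ ε₀ := by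
    intro s hs
    have := hδ₀p s hs (hist y s) (lt_of_le_of_lt (hdist s hs) (by linarith))
    rw [abs_sub_comm] at this
    exact le_of_lt this
  -- integrability
  have hk : IntervalIntegrable (fun s => (t - s) ^ (α - 1)) volume 0 t := by
    have h1 : IntervalIntegrable (fun u : ℝ => u ^ (α - 1)) volume t 0 :=
      intervalIntegral.intervalIntegrable_rpow' (by linarith)
    simpa using h1.comp_sub_left t
  have hsub : Set.uIcc (0:ℝ) t ⊆ Set.Icc 0 T := by
    rw [Set.uIcc_of_le ht0]
    exact Set.Icc_subset_Icc le_rfl htT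
  have hFx : ContinuousOn (fun s => f s (hist x s)) (Set.Icc 0 T) := by
    have hmap : Set.MapsTo (fun s => (s, hist x s)) (Set.Icc 0 T)
        (Set.Icc 0 T ×ˢ Set.univ) := fun s hs => ⟨hs, Set.mem_univ _⟩
    exact hf.comp (continuousOn_id.prodMk hΦ) hmap
  have hFy : ContinuousOn (fun s => f s (hist y s)) (Set.Icc 0 T) := by
    have hmap : Set.MapsTo (fun s => (s, hist y s)) (Set.Icc 0 T)
        (Set.Icc 0 T ×ˢ Set.univ) := fun s hs => ⟨hs, Set.mem_univ _⟩
    exact hf.comp (continuousOn_id.prodMk hΦy) hmap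
  have hIx : IntervalIntegrable (fun s => (t - s) ^ (α - 1) * f s (hist x s)) volume 0 t :=
    hk.mul_continuousOn (hFx.mono hsub)
  have hIy : IntervalIntegrable (fun s => (t - s) ^ (α - 1) * f s (hist y s)) volume 0 t :=
    hk.mul_continuousOn (hFy.mono hsub)
  -- value of ∫ (t-s)^(α-1)
  have hkval : (∫ s in (0:ℝ)..t, (t - s) ^ (α - 1)) = t ^ α / α := by
    have h1 : (∫ s in (0:ℝ)..t, (t - s) ^ (α - 1)) = ∫ u in (t - t)..(t - 0), u ^ (α - 1) :=
      intervalIntegral.integral_comp_sub_left (fun u => u ^ (α - 1)) t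
    rw [h1]
    simp only [sub_self, sub_zero]
    rw [integral_rpow (Or.inl (by linarith))]
    rw [Real.zero_rpow (by linarith : α - 1 + 1 ≠ 0)]
    rw [show α - 1 + 1 = α by ring]
    ring
  -- main estimate
  have hmain :
      |(∫ s in (0:ℝ)..t, (t - s) ^ (α - 1) * f s (hist x s)) -
        ∫ s in (0:ℝ)..t, (t - s) ^ (α - 1) * f s (hist y s)| ≤ ε₀ * (t ^ α / α) := by
    rw [← intervalIntegral.integral_sub hIx hIy]
    have hb1 := intervalIntegral.abs_integral_le_integral_abs (f := fun s =>
      (t - s) ^ (α - 1) * f s (hist x s) - (t - s) ^ (α - 1) * f s (hist y s)) (μ := volume) ht0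
    refine hb1.trans ?_
    have hb2 : (∫ s in (0:ℝ)..t,
        |(t - s) ^ (α - 1) * f s (hist x s) - (t - s) ^ (α - 1) * f s (hist y s)|) ≤
        ∫ s in (0:ℝ)..t, (t - s) ^ (α - 1) * ε₀ := by
      apply intervalIntegral.integral_mono_on ht0 ((hIx.sub hIy).abs) (hk.mul_const ε₀)
      intro s hs
      have hknn : (0:ℝ) ≤ (t - s) ^ (α - 1) := Real.rpow_nonneg (by linarith [hs.2]) _
      rw [← mul_sub, abs_mul, abs_of_nonneg hknn]
      apply mul_le_mul_of_nonneg_left _ hknn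
      exact hFdiff s ⟨hs.1, hs.2.trans htT⟩
    refine hb2.trans ?_
    rw [intervalIntegral.integral_mul_const, hkval]
    ring_nf
    exact le_rfl
  have heq : (φ 0 + (1 / Real.Gamma α) *
      ∫ s in (0:ℝ)..t, (t - s) ^ (α - 1) * f s (hist x s)) -
      (φ 0 + (1 / Real.Gamma α) *
      ∫ s in (0:ℝ)..t, (t - s) ^ (α - 1) * f s (hist y s)) =
      (1 / Real.Gamma α) *
      ((∫ s in (0:ℝ)..t, (t - s) ^ (α - 1) * f s (hist x s)) -
       ∫ s in (0:ℝ)..t, (t - s) ^ (α - 1) * f s (hist y s)) := by ring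
  rw [heq, abs_mul, abs_of_nonneg (by positivity : (0:ℝ) ≤ 1 / Real.Gamma α)]
  have htα : t ^ α ≤ T ^ α := Real.rpow_le_rpow ht0 htT hα.le
  calc (1 / Real.Gamma α) *
      |(∫ s in (0:ℝ)..t, (t - s) ^ (α - 1) * f s (hist x s)) -
       ∫ s in (0:ℝ)..t, (t - s) ^ (α - 1) * f s (hist y s)|
      ≤ (1 / Real.Gamma α) * (ε₀ * (t ^ α / α)) := by
        apply mul_le_mul_of_nonneg_left hmain (by positivity)
    _ ≤ (1 / Real.Gamma α) * (ε₀ * (T ^ α / α)) := by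
        apply mul_le_mul_of_nonneg_left _ (by positivity)
        apply mul_le_mul_of_nonneg_left _ hε₀.le
        gcongr
    _ = C * ε₀ := by rw [hCdef]; ring
    _ = ε / 2 := by
        rw [hε₀def]
        field_simp
    _ < ε := by linarith
end
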